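/- Let H be a Hopf algebra over a field k with bijective antipode σ. Then F_r(H) = σ(F_l(H)), where F_l(H) and F_r(H) are the left and right locally finite parts of H. -/

import Mathlib

/-!
In the convolution algebra `Hom(H, H ⊗ H)` the coproduct factors as `Δ = ι₁ * ι₂` with
`ι₁ x = x ⊗ 1` and `ι₂ x = 1 ⊗ x`. Both are algebra maps, so `ιⱼ ∘ σ` is a convolution inverse
of `ιⱼ`, and the convolution inverse `Δ ∘ σ` of `Δ` equals `(ι₂ ∘ σ) * (ι₁ ∘ σ)`, that is,
`Δ (σ a) = σ a₍₂₎ ⊗ σ a₍₁₎`. Together with `σ (a b) = σ b σ a` this gives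
`(ad_r σ u) (σ x) = σ ((ad_l u) x)`, so the bijection `σ` carries the span of the `ad_l`-orbit
of `x` onto the span of the `ad_r`-orbit of `σ x`.
-/

open scoped TensorProduct

/-- The right adjoint action `(ad_r m) u = σ(m₍₁₎) * u * m₍₂₎`, as a linear map in `u`. -/
noncomputable def adR (k : Type*) {H : Type*} [Field k] [Ring H] [HopfAlgebra k H]
    (m : H) : H →ₗ[k] H :=
  TensorProduct.lift
    (LinearMap.mk₂ k
      (fun a b => (LinearMap.mulLeft k (HopfAlgebra.antipode (R := k) a)).comp
        (LinearMap.mulRight k b))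
      (fun a a' b => by ext x; simp [add_mul, mul_add])
      (fun c a b => by ext x; simp [smul_mul_assoc])
      (fun a b b' => by ext x; simp [mul_add])
      (fun c a b => by ext x; simp [mul_smul_comm]))
    (Coalgebra.comul (R := k) m)

/-- The left adjoint action `(ad_l m) u = m₍₁₎ * u * σ(m₍₂₎)`, as a linear map in `u`. -/
noncomputable def adL (k : Type*) {H : Type*} [Field k] [Ring H] [HopfAlgebra k H]
    (m : H) : H →ₗ[k] H :=
  TensorProduct.lift
    (LinearMap.mk₂ k
      (fun a b => (LinearMap.mulLeft k a).comp
        (LinearMap.mulRight k (HopfAlgebra.antipode (R := k) b)))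
      (fun a a' b => by ext x; simp [add_mul, mul_add])
      (fun c a b => by ext x; simp [smul_mul_assoc])
      (fun a b b' => by ext x; simp [mul_add])
      (fun c a b => by ext x; simp [mul_smul_comm]))
    (Coalgebra.comul (R := k) m)

/-- The left locally finite part `F_l(H)`. -/
def leftLocFin (k H : Type*) [Field k] [Ring H] [HopfAlgebra k H] : Set H :=
  {x : H | FiniteDimensional k (Submodule.span k (Set.range fun u : H => adL k u x))}

/-- The right locally finite part `F_r(H)`. -/
def rightLocFin (k H : Type*) [Field k] [Ring H] [HopfAlgebra k H] : Set H :=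
  {x : H | FiniteDimensional k (Submodule.span k (Set.range fun u : H => adR k u x))}

open Coalgebra WithConv
open Algebra.TensorProduct (includeLeft includeRight)

namespace HopfAlgebra
variable {R A B : Type*} [CommSemiring R] [Semiring A] [HopfAlgebra R A] [Semiring B] [Algebra R B]

lemma toConv_comp_antipode_mul_toConv (h : A →ₐ[R] B) :
    toConv (h.toLinearMap ∘ₗ antipode R) * toConv h.toLinearMap = 1 := by
  have := LinearMap.algHom_comp_convMul_distrib h (toConv (antipode R)) (toConv LinearMap.id)
  rw [LinearMap.antipode_mul_id, ofConv_toConv, ofConv_toConv, LinearMap.comp_id] at this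
  apply WithConv.ofConv_injective
  rw [← this]
  ext a
  simp

lemma toConv_includeLeft_mul_toConv_includeRight :
    toConv (includeLeft : A →ₐ[R] A ⊗[R] A).toLinearMap * toConv includeRight.toLinearMap =
      toConv (comul (R := R) (A := A)) := by
  ext a
  simp [(ℛ R a).convMul_apply, ← (ℛ R a).eq]

lemma comul_comp_antipode :
    comul ∘ₗ antipode R = TensorProduct.map (antipode R) (antipode R) ∘ₗ
      (TensorProduct.comm R A A).toLinearMap ∘ₗ comul := by
  let ι₁ : A →ₐ[R] A ⊗[R] A := includeLeft
  let ι₂ : A →ₐ[R] A ⊗[R] A := includeRight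
  have hinv : (toConv (ι₂.toLinearMap ∘ₗ antipode R) * toConv (ι₁.toLinearMap ∘ₗ antipode R)) *
      toConv comul = 1 := by
    rw [← toConv_includeLeft_mul_toConv_includeRight, mul_assoc,
      ← mul_assoc (toConv (ι₁.toLinearMap ∘ₗ antipode R)), toConv_comp_antipode_mul_toConv ι₁,
      one_mul, toConv_comp_antipode_mul_toConv ι₂]
  apply WithConv.toConv_injective
  rw [← left_inv_eq_right_inv hinv LinearMap.comul_right_inv]
  ext a
  simp [ι₁, ι₂, (ℛ R a).convMul_apply, ← (ℛ R a).eq]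

lemma comul_antipode (a : A) :
    comul (antipode R a) =
      TensorProduct.map (antipode R) (antipode R) (TensorProduct.comm R A A (comul a)) :=
  congr($comul_comp_antipode a)

end HopfAlgebra

namespace Coalgebra.Repr
variable {R A ι : Type*} [CommSemiring R] [Semiring A] [HopfAlgebra R A]

def antipode {a : A} (𝓡 : Repr R a ι) : Repr R (HopfAlgebra.antipode R a) ι where
  index := 𝓡.index
  left i := HopfAlgebra.antipode R (𝓡.right i)
  right i := HopfAlgebra.antipode R (𝓡.left i)
  eq := by simp [HopfAlgebra.comul_antipode, ← 𝓡.eq]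

end Coalgebra.Repr

section AdjointAction
variable {k H : Type*} [Field k] [Ring H] [HopfAlgebra k H]

local notation "σ" => HopfAlgebra.antipode (R := k) (A := H)

lemma Coalgebra.Repr.adR_apply {m : H} {ι : Type*} (𝓡 : Repr k m ι) (x : H) :
    adR k m x = ∑ i ∈ 𝓡.index, σ (𝓡.left i) * x * 𝓡.right i := by
  simp [adR, ← 𝓡.eq, mul_assoc]

lemma Coalgebra.Repr.adL_apply {m : H} {ι : Type*} (𝓡 : Repr k m ι) (x : H) :
    adL k m x = ∑ i ∈ 𝓡.index, 𝓡.left i * x * σ (𝓡.right i) := by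
  simp [adL, ← 𝓡.eq, mul_assoc]

lemma adR_antipode_antipode (u x : H) : adR k (σ u) (σ x) = σ (adL k u x) := by
  simp [(ℛ k u).antipode.adR_apply, (ℛ k u).adL_apply, Repr.antipode,
    HopfAlgebra.antipode_mul_antidistrib, mul_assoc]

lemma range_adR_antipode (hσ : Function.Surjective σ) (x : H) :
    Set.range (fun m => adR k m (σ x)) = σ '' Set.range (fun u => adL k u x) := by
  rw [← Set.range_comp, ← hσ.range_comp]
  simp [Function.comp_def, adR_antipode_antipode]

lemma preimage_antipode_rightLocFin (hσ : Function.Bijective σ) :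
    σ ⁻¹' rightLocFin k H = leftLocFin k H := by
  ext x
  simp only [Set.mem_preimage, rightLocFin, leftLocFin, Set.mem_ofPred_eq]
  rw [range_adR_antipode hσ.2, Submodule.span_image]
  exact (Module.Finite.equiv_iff ((LinearEquiv.ofBijective σ hσ).submoduleMap _)).symm

end AdjointAction

/-- For a Hopf algebra `H` with bijective antipode `σ` (with inverse `σinv`),
one has `F_r(H) = σ(F_l(H))`. -/
theorem rightLocFin_eq_antipode_image_leftLocFin
    (k H : Type*) [Field k] [Ring H] [HopfAlgebra k H]
    (σinv : H →ₗ[k] H)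
    (hσ1 : ∀ x : H, σinv (HopfAlgebra.antipode (R := k) x) = x)
    (hσ2 : ∀ x : H, HopfAlgebra.antipode (R := k) (σinv x) = x) :
    rightLocFin k H = (HopfAlgebra.antipode (R := k) (A := H)) '' leftLocFin k H := by
  have hσ : Function.Bijective (HopfAlgebra.antipode (R := k) (A := H)) :=
    ⟨Function.LeftInverse.injective hσ1, Function.RightInverse.surjective hσ2⟩
  rw [← preimage_antipode_rightLocFin hσ, Set.image_preimage_eq _ hσ.2]
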